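/- arXiv:2009.03855 — 3 statements merged into one kernel-verified Lean document; each statement's English description precedes it below -/
import Mathlib

section
/- Let H and E be types (of hypotheses and examples), let covers : H → E → Prop be a relation, and let S_M be a finite set of hypotheses. Then there is no infinite sequence of hypothesis–example pairs ⟨A_i, e_i⟩ (i ∈ ℕ) such that for every i: (1) A_i covers every earlier example e_j with j < i; (2) A_i does not cover e_i; and (3) A_i belongs to S_M. Equivalently, there do not exist functions A : ℕ → H and e : ℕ → E with, for all i, A i ∈ S_M, (∀ j < i, covers (A i) (e j)), and ¬ covers (A i) (e i). -/
/-- Given a finite hypothesis space `S_M`, there is no infinite sequence of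
hypothesis–example pairs `⟨A i, e i⟩` such that for every `i`: `A i ∈ S_M`,
`A i` covers every earlier example `e j` (`j < i`), and `A i` does not cover `e i`. -/
theorem no_infinite_counterexample_sequence {H E : Type*}
    (covers : H → E → Prop) (S_M : Finset H) :
    ¬ ∃ (A : ℕ → H) (e : ℕ → E),
        ∀ i : ℕ, A i ∈ S_M ∧ (∀ j : ℕ, j < i → covers (A i) (e j)) ∧
          ¬ covers (A i) (e i) := by
  rintro ⟨A, e, h⟩
  have inj : Function.Injective A := by
    intro i j hij
    rcases lt_trichotomy i j with hlt | heq | hgt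
    · exact absurd (hij ▸ (h j).2.1 i hlt) (h i).2.2
    · exact heq
    · exact absurd (hij ▸ (h i).2.1 j hgt) ((hij ▸ (h j).2.2))
  have : Set.MapsTo A Set.univ (S_M : Set H) := fun i _ => (h i).1
  have hfin : (Set.univ : Set ℕ).Finite :=
    Set.Finite.of_finite_image (S_M.finite_toSet.subset (Set.image_subset_iff.mpr this))
      (inj.injOn)
  exact Set.infinite_univ hfin
end

section
/- Let G be a graph in the class 𝒢 and, for each node u ∈ V, let Γ_u be the bijection from E^o(u) onto {1,…,|E^o(u)|} that orders outgoing edges by the label-set order (i.e., L < L' ⇔ Γ_u(L) < Γ_u(L')). Then there is at most one bijection f : V → {1,…,|V|} with f(v_1) = 1 such that for all nodes u, v ∈ V∖{v_1}, Π_I(u) < Π_I(v) if and only if f(u) < f(v), where Π_I is the parent function induced by f and {Γ_u}. -/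
namespace ISA

/-- A label set over the fixed set of labels `𝓛 = {l_1, …, l_k}`, identified with `Fin k`. -/
abbrev LabelSet (k : ℕ) := Set (Fin k)

/-- The total order on label sets: `L < L'` iff there exists `m` with `l_m ∉ L` and
`l_m ∈ L'`, and no `m' < m` with `l_{m'} ∈ L` and `l_{m'} ∉ L'`. -/
def LabelLt {k : ℕ} (L L' : LabelSet k) : Prop :=
  ∃ m : Fin k, m ∉ L ∧ m ∈ L' ∧ ∀ m' : Fin k, m' < m → ¬(m' ∈ L ∧ m' ∉ L')

/-- A labeled directed edge `(u, v, L)`; nodes are `Fin n` with start node `0` (playing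
the role of `v_1`). -/
abbrev Edge (n k : ℕ) := Fin n × Fin n × LabelSet k

/-- Outgoing edges `E^o(u)` of node `u`. -/
def outEdges {n k : ℕ} (E : Set (Edge n k)) (u : Fin n) : Set (Edge n k) :=
  {e ∈ E | e.1 = u}

/-- Incoming edges `E^i(v)` of node `v`. -/
def inEdges {n k : ℕ} (E : Set (Edge n k)) (v : Fin n) : Set (Edge n k) :=
  {e ∈ E | e.2.1 = v}

/-- The label sets on the outgoing edges of node `u`. -/
def outLabels {n k : ℕ} (E : Set (Edge n k)) (u : Fin n) : Set (LabelSet k) :=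
  (fun e : Edge n k => e.2.2) '' outEdges E u

/-- Reachability along a (possibly empty) directed path. -/
def Reachable {n k : ℕ} (E : Set (Edge n k)) : Fin n → Fin n → Prop :=
  Relation.ReflTransGen (fun a b => ∃ L : LabelSet k, (a, b, L) ∈ E)

/-- The graph `G = (V, E)` belongs to the class `𝒢`: (A1) `0` is the designated start
node; (A2) every other node is reachable from the start node on a directed path;
(A3) outgoing label sets from each node are unique. -/
def InClassG {n k : ℕ} [NeZero n] (E : Set (Edge n k)) : Prop :=
  (∀ u : Fin n, u ≠ 0 → Reachable E 0 u) ∧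
  (∀ (u v v' : Fin n) (L : LabelSet k), (u, v, L) ∈ E → (u, v', L) ∈ E → v = v')

/-- A graph indexing `I(G) = ⟨f, {Γ_u}⟩`: `f : V → {1,…,|V|}` is a bijection with
`f(v_1) = 1`, and each `Γ_u` is a bijection from `E^o(u)` (identified, via (A3), with
its set of label sets) onto `{1,…,|E^o(u)|}`. -/
def IsIndexing {n k : ℕ} [NeZero n] (E : Set (Edge n k))
    (f : Fin n → ℕ) (Γ : Fin n → LabelSet k → ℕ) : Prop :=
  Set.BijOn f Set.univ (Set.Icc 1 n) ∧ f 0 = 1 ∧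
  ∀ u : Fin n, Set.BijOn (Γ u) (outLabels E u) (Set.Icc 1 (outEdges E u).ncard)

/-- Strict lexicographic order on pairs of integers. -/
def lexLt (p q : ℕ × ℕ) : Prop := p.1 < q.1 ∨ (p.1 = q.1 ∧ p.2 < q.2)

def lexLe (p q : ℕ × ℕ) : Prop := lexLt p q ∨ p = q

/-- `p` is the value of the parent function `Π_I(v)`, i.e. the lexicographic minimum of
`(f u, Γ_u(L))` over incoming edges `(u, v, L) ∈ E^i(v)`. -/
def IsParent {n k : ℕ} (E : Set (Edge n k)) (f : Fin n → ℕ)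
    (Γ : Fin n → LabelSet k → ℕ) (v : Fin n) (p : ℕ × ℕ) : Prop :=
  (∃ e ∈ inEdges E v, p = (f e.1, Γ e.1 e.2.2)) ∧
  ∀ e ∈ inEdges E v, lexLe p (f e.1, Γ e.1 e.2.2)

/-- The graph indexing given by `f` and `Γ` is a BFS traversal:
(1) for all nodes `u, v ≠ v_1`, `Π_I(u) < Π_I(v) ↔ f(u) < f(v)`;
(2) for each node `u` and outgoing label sets `L, L'`, `L < L' ↔ Γ_u(L) < Γ_u(L')`. -/
def IsBFS {n k : ℕ} [NeZero n] (E : Set (Edge n k))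
    (f : Fin n → ℕ) (Γ : Fin n → LabelSet k → ℕ) : Prop :=
  (∀ u v : Fin n, u ≠ 0 → v ≠ 0 → ∀ pu pv : ℕ × ℕ,
    IsParent E f Γ u pu → IsParent E f Γ v pv → (lexLt pu pv ↔ f u < f v)) ∧
  (∀ u : Fin n, ∀ L L' : LabelSet k, L ∈ outLabels E u → L' ∈ outLabels E u →
    (LabelLt L L' ↔ Γ u L < Γ u L'))


lemma lexLt_asymm {p q : ℕ × ℕ} (h1 : lexLt p q) (h2 : lexLt q p) : False := by
  obtain ⟨a, b⟩ := p; obtain ⟨c, d⟩ := q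
  simp only [lexLt] at h1 h2; omega

lemma lexLe_fst_le {p q : ℕ × ℕ} (h : lexLe p q) : p.1 ≤ q.1 := by
  rcases h with (h | h) | h
  · omega
  · omega
  · rw [h]

lemma lexLt_fst_le {p q : ℕ × ℕ} (h : lexLt p q) : p.1 ≤ q.1 := by
  rcases h with h | h <;> omega

lemma exists_parent {n k : ℕ} (E : Set (Edge n k)) (f : Fin n → ℕ)
    (Γ : Fin n → LabelSet k → ℕ) {v : Fin n}
    (hne : ∃ e, e ∈ inEdges E v) : ∃ p, IsParent E f Γ v p := by
  classical
  let S : Set (ℕ × ℕ) := {p | ∃ e ∈ inEdges E v, p = (f e.1, Γ e.1 e.2.2)}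
  obtain ⟨e0, he0⟩ := hne
  have hS0 : (f e0.1, Γ e0.1 e0.2.2) ∈ S := ⟨e0, he0, rfl⟩
  have h1ne : (Prod.fst '' S).Nonempty := ⟨_, _, hS0, rfl⟩
  obtain ⟨p0, hp0S, hp01⟩ := Nat.sInf_mem h1ne
  let T : Set ℕ := {b | (sInf (Prod.fst '' S), b) ∈ S}
  have hTne : T.Nonempty := ⟨p0.2, by
    show (sInf (Prod.fst '' S), p0.2) ∈ S
    rwa [← hp01, Prod.mk.eta]⟩
  have hmem : (sInf (Prod.fst '' S), sInf T) ∈ S := Nat.sInf_mem hTne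
  refine ⟨(sInf (Prod.fst '' S), sInf T), hmem, ?_⟩
  intro e he
  have hqS : (f e.1, Γ e.1 e.2.2) ∈ S := ⟨e, he, rfl⟩
  have h1 : sInf (Prod.fst '' S) ≤ f e.1 :=
    Nat.sInf_le ⟨(f e.1, Γ e.1 e.2.2), hqS, rfl⟩
  rcases lt_or_eq_of_le h1 with h | h
  · exact Or.inl (Or.inl h)
  · have hq2 : Γ e.1 e.2.2 ∈ T := by
      show (sInf (Prod.fst '' S), Γ e.1 e.2.2) ∈ S
      rwa [h]
    have h2 : sInf T ≤ Γ e.1 e.2.2 := Nat.sInf_le hq2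
    rcases lt_or_eq_of_le h2 with h' | h'
    · exact Or.inl (Or.inr ⟨h, h'⟩)
    · exact Or.inr (by rw [h, h'])

lemma parent_fst_lt {n k : ℕ} [NeZero n] {E : Set (Edge n k)}
    (hreach : ∀ u : Fin n, u ≠ 0 → Reachable E 0 u)
    {f : Fin n → ℕ} {Γ : Fin n → LabelSet k → ℕ}
    (hf : Set.BijOn f Set.univ (Set.Icc 1 n)) (hs : f 0 = 1)
    (hb : ∀ u v : Fin n, u ≠ 0 → v ≠ 0 → ∀ pu pv : ℕ × ℕ,
      IsParent E f Γ u pu → IsParent E f Γ v pv → (lexLt pu pv ↔ f u < f v))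
    {v : Fin n} (hv : v ≠ 0) {p : ℕ × ℕ} (hp : IsParent E f Γ v p) :
    p.1 < f v := by
  have hinj : Function.Injective f := fun a b h =>
    hf.2.1 (Set.mem_univ a) (Set.mem_univ b) h
  have hmem : ∀ x : Fin n, f x ∈ Set.Icc 1 n := fun x => hf.1 (Set.mem_univ x)
  have hv2 : 2 ≤ f v := by
    have h1 := hmem v
    have h2 : f v ≠ 1 := fun h => hv (hinj (h.trans hs.symm))
    simp only [Set.mem_Icc] at h1; omega
  have key : ∀ x : Fin n, Reachable E 0 x → f v ≤ f x →
      ∃ a b : Fin n, ∃ L : LabelSet k, (a, b, L) ∈ E ∧ f a < f v ∧ f v ≤ f b := by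
    intro x hx
    induction hx with
    | refl => intro hle; rw [hs] at hle; omega
    | @tail b c hab hbc ih =>
      intro hle
      by_cases h : f v ≤ f b
      · exact ih h
      · obtain ⟨L, hL⟩ := hbc
        exact ⟨b, c, L, hL, by omega, hle⟩
  obtain ⟨a, b, L, hE, haf, hbf⟩ := key v (hreach v hv) le_rfl
  by_cases hbv : b = v
  · subst hbv
    have h := hp.2 (a, b, L) ⟨hE, rfl⟩
    have := lexLe_fst_le h
    simp only at this; omega
  · have hfvb : f v < f b := lt_of_le_of_ne hbf (fun h => hbv (hinj h.symm))
    have hb0 : b ≠ 0 := by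
      intro h; rw [h, hs] at hfvb; omega
    obtain ⟨pb, hpb⟩ := exists_parent E f Γ (⟨(a, b, L), hE, rfl⟩)
    have hlt : lexLt p pb := (hb v b hv hb0 p pb hp hpb).mpr hfvb
    have h2 := lexLe_fst_le (hpb.2 (a, b, L) ⟨hE, rfl⟩)
    have h3 := lexLt_fst_le hlt
    simp only at h2; omega

lemma parent_transfer {n k : ℕ} {E : Set (Edge n k)} {f g : Fin n → ℕ}
    {Γ : Fin n → LabelSet k → ℕ} {i : ℕ}
    (hag : ∀ x, f x < i → f x = g x) (hag' : ∀ x, g x < i → f x = g x)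
    {v : Fin n} {p : ℕ × ℕ} (hp : IsParent E f Γ v p) (hpi : p.1 < i) :
    IsParent E g Γ v p := by
  obtain ⟨⟨e, he, hpe⟩, hmin⟩ := hp
  have hfe : f e.1 < i := by rw [hpe] at hpi; exact hpi
  constructor
  · exact ⟨e, he, by rw [hpe, hag e.1 hfe]⟩
  · intro e' he'
    by_cases hc : g e'.1 < i
    · have := hmin e' he'
      rwa [hag' e'.1 hc] at this
    · exact Or.inl (Or.inl (by simp only; omega))

/-- Given a graph `G` in the class `𝒢` and, for each node, the bijection `Γ_u` ordering
outgoing edges by the label-set order, there is at most one bijection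
`f : V → {1,…,|V|}` with `f(v_1) = 1` such that for all `u, v ≠ v_1`,
`Π_I(u) < Π_I(v) ↔ f(u) < f(v)` (with `Π_I` the parent function induced by `f` and `Γ`). -/
theorem at_most_one_bfs_f {n k : ℕ} [NeZero n] (E : Set (Edge n k))
    (hG : InClassG E)
    (Γ : Fin n → LabelSet k → ℕ)
    (hΓbij : ∀ u : Fin n, Set.BijOn (Γ u) (outLabels E u) (Set.Icc 1 (outEdges E u).ncard))
    (hΓord : ∀ u : Fin n, ∀ L L' : LabelSet k, L ∈ outLabels E u → L' ∈ outLabels E u →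
      (LabelLt L L' ↔ Γ u L < Γ u L'))
    (f₁ f₂ : Fin n → ℕ)
    (hf₁ : Set.BijOn f₁ Set.univ (Set.Icc 1 n)) (hs₁ : f₁ 0 = 1)
    (hf₂ : Set.BijOn f₂ Set.univ (Set.Icc 1 n)) (hs₂ : f₂ 0 = 1)
    (hb₁ : ∀ u v : Fin n, u ≠ 0 → v ≠ 0 → ∀ pu pv : ℕ × ℕ,
      IsParent E f₁ Γ u pu → IsParent E f₁ Γ v pv → (lexLt pu pv ↔ f₁ u < f₁ v))
    (hb₂ : ∀ u v : Fin n, u ≠ 0 → v ≠ 0 → ∀ pu pv : ℕ × ℕ,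
      IsParent E f₂ Γ u pu → IsParent E f₂ Γ v pv → (lexLt pu pv ↔ f₂ u < f₂ v)) :
    f₁ = f₂ := by
  have hinj₁ : Function.Injective f₁ := fun a b h =>
    hf₁.2.1 (Set.mem_univ a) (Set.mem_univ b) h
  have hinj₂ : Function.Injective f₂ := fun a b h =>
    hf₂.2.1 (Set.mem_univ a) (Set.mem_univ b) h
  have hmem₁ : ∀ x : Fin n, f₁ x ∈ Set.Icc 1 n := fun x => hf₁.1 (Set.mem_univ x)
  have hmem₂ : ∀ x : Fin n, f₂ x ∈ Set.Icc 1 n := fun x => hf₂.1 (Set.mem_univ x)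
  have hin : ∀ v : Fin n, v ≠ 0 → ∃ e, e ∈ inEdges E v := by
    intro v hv
    rcases ((hG.1) v hv).cases_tail with h | ⟨c, _, L, hL⟩
    · exact absurd h hv
    · exact ⟨(c, v, L), hL, rfl⟩
  suffices h : ∀ m : ℕ, ∀ v : Fin n, f₁ v = m → f₂ v = m by
    funext x; exact (h (f₁ x) x rfl).symm
  intro m
  induction m using Nat.strong_induction_on with
  | _ m ih =>
  intro u hu
  by_contra hne
  -- agreement below m
  have hag : ∀ x, f₁ x < m → f₁ x = f₂ x := fun x h => (ih _ h x rfl).symm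
  have hag' : ∀ x, f₂ x < m → f₁ x = f₂ x := by
    intro x h
    have hx2 := hmem₂ x
    simp only [Set.mem_Icc] at hx2
    obtain ⟨y, -, hy⟩ := hf₁.2.2 (Set.mem_Icc.mpr hx2)
    have : f₂ y = f₂ x := by rw [ih (f₁ y) (by omega) y rfl, hy]
    rw [← hinj₂ this, hy]; exact this.symm
  have hf₂u : m < f₂ u := by
    rcases lt_trichotomy (f₂ u) m with h | h | h
    · have := hag' u h; omega
    · exact absurd h hne
    · exact h
  have hmIcc := hmem₁ u
  simp only [Set.mem_Icc, hu] at hmIcc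
  obtain ⟨w, -, hw⟩ := hf₂.2.2 (Set.mem_Icc.mpr hmIcc)
  have hwu : w ≠ u := fun h => by rw [h] at hw; exact hne hw
  have hf₁w : m < f₁ w := by
    rcases lt_trichotomy (f₁ w) m with h | h | h
    · have := hag w h; rw [hw] at this; omega
    · exact absurd (hinj₁ (h.trans hu.symm)) hwu
    · exact h
  have hu0 : u ≠ 0 := by
    intro h; subst h; exact hne (hs₂.trans (hs₁.symm.trans hu))
  have hw0 : w ≠ 0 := by
    intro h; rw [h, hs₂] at hw
    exact hu0 (hinj₁ (hu.trans (hw.symm.trans hs₁.symm)))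
  obtain ⟨p1, hp1⟩ := exists_parent E f₁ Γ (hin u hu0)
  obtain ⟨q2, hq2⟩ := exists_parent E f₂ Γ (hin w hw0)
  have hp1lt : p1.1 < m := by
    have := parent_fst_lt hG.1 hf₁ hs₁ hb₁ hu0 hp1; omega
  have hq2lt : q2.1 < m := by
    have := parent_fst_lt hG.1 hf₂ hs₂ hb₂ hw0 hq2; rw [hw] at this; omega
  have hp1' : IsParent E f₂ Γ u p1 := parent_transfer hag hag' hp1 hp1lt
  have hq2' : IsParent E f₁ Γ w q2 := by
    refine parent_transfer (f := f₂) (g := f₁) ?_ ?_ hq2 hq2lt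
    · exact fun x h => (hag' x h).symm
    · exact fun x h => (hag x h).symm
  have h1 : lexLt p1 q2 := (hb₁ u w hu0 hw0 p1 q2 hp1 hq2').mpr (by omega)
  have h2 : lexLt q2 p1 := (hb₂ w u hw0 hu0 q2 p1 hq2 hp1').mpr (by rw [hw]; omega)
  exact lexLt_asymm h1 h2


end ISA
end

section
/- If a truth assignment X to the SAT variables 𝒳 satisfies all clauses in 𝒞, then in the induced pair 𝒢(X) = (G, I(G)) the graph indexing I(G) is a BFS traversal of G; since each graph in the class 𝒢 has a unique BFS traversal, the SAT encoding cannot produce two different assignments of node and edge integers representing the same graph G. -/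
namespace ISA

/-- A truth assignment to the SAT variables `𝒳`: `ed i j e`, `label i e m`, `pa i j`,
`sm i j e`, and `lt i e m` (the latter standing for the variable `lt(i, e-1, e, m)`,
which exists for `e > 1`). Node integers `i, j` range over `1..n`, edge integers
`e` over the positive integers, and `m` over the labels `Fin k`. -/
structure SatAssign (k : ℕ) where
  ed : ℕ → ℕ → ℕ → Prop
  label : ℕ → ℕ → Fin k → Prop
  pa : ℕ → ℕ → Prop
  sm : ℕ → ℕ → ℕ → Prop
  lt : ℕ → ℕ → Fin k → Prop

/-- The assignment `X` satisfies all SAT clauses in `𝒞` (clauses 1–14), instantiated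
over all admissible index combinations. -/
def SatisfiesAll (n k : ℕ) (X : SatAssign k) : Prop :=
  -- (1) each node j > 1 has an incoming BFS edge
  (∀ j : ℕ, 1 < j → j ≤ n → ∃ i : ℕ, 1 ≤ i ∧ i < j ∧ X.pa i j) ∧
  -- (2) the incoming BFS edge is unique
  (∀ i i' j : ℕ, 1 ≤ i → i < i' → i' < j → j ≤ n → X.pa i j → ¬ X.pa i' j) ∧
  -- (3) BFS edge implies smallest integer
  (∀ i j : ℕ, 1 ≤ i → i < j → j ≤ n → X.pa i j → ∃ e : ℕ, 1 ≤ e ∧ X.sm i j e) ∧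
  -- (4) respect BFS order
  (∀ i i' j j' e : ℕ, 1 ≤ i' → i' < i → i < j → j ≤ j' → j' ≤ n → 1 ≤ e →
    X.pa i j → ¬ X.ed i' j' e) ∧
  -- (5) smallest integer implies BFS edge
  (∀ i j e : ℕ, 1 ≤ i → i < j → j ≤ n → 1 ≤ e → X.sm i j e → X.pa i j) ∧
  -- (6) smallest integer is unique
  (∀ i j e e' : ℕ, 1 ≤ i → i < j → j ≤ n → 1 ≤ e → e < e' → X.sm i j e → ¬ X.sm i j e') ∧
  -- (7) smallest integer implies edge
  (∀ i j e : ℕ, 1 ≤ i → i < j → j ≤ n → 1 ≤ e → X.sm i j e → X.ed i j e) ∧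
  -- (8) correctly break ties
  (∀ i j j' e e' : ℕ, 1 ≤ i → i < j → j ≤ j' → j' ≤ n → 1 ≤ e' → e' < e →
    X.sm i j e → ¬ X.ed i j' e') ∧
  -- (9) edge integers start at 1 and are contiguous
  (∀ i j e : ℕ, 1 ≤ i → i ≤ n → 1 ≤ j → j ≤ n → 1 < e → X.ed i j e →
    ∃ j' : ℕ, 1 ≤ j' ∧ j' ≤ n ∧ X.ed i j' (e - 1)) ∧
  -- (10) edge integers cannot be duplicated
  (∀ i j j' e : ℕ, 1 ≤ i → i ≤ n → 1 ≤ j → j < j' → j' ≤ n → 1 ≤ e →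
    X.ed i j e → ¬ X.ed i j' e) ∧
  -- (11) lt(i,e-1,e,m) ⇒ ¬label(i,e-1,m) ∨ lt(i,e-1,e,m-1) (last disjunct only if m > 1)
  (∀ (i e : ℕ) (m : Fin k), 1 ≤ i → i ≤ n → 1 < e → X.lt i e m →
    (¬ X.label i (e - 1) m ∨ ∃ m' : Fin k, (m' : ℕ) + 1 = (m : ℕ) ∧ X.lt i e m')) ∧
  -- (12) lt(i,e-1,e,m) ⇒ label(i,e,m) ∨ lt(i,e-1,e,m-1) (last disjunct only if m > 1)
  (∀ (i e : ℕ) (m : Fin k), 1 ≤ i → i ≤ n → 1 < e → X.lt i e m →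
    (X.label i e m ∨ ∃ m' : Fin k, (m' : ℕ) + 1 = (m : ℕ) ∧ X.lt i e m')) ∧
  -- (13) ed(i,j,e) ⇒ ⋁_m lt(i,e-1,e,m)
  (∀ i j e : ℕ, 1 ≤ i → i ≤ n → 1 ≤ j → j ≤ n → 1 < e → X.ed i j e →
    ∃ m : Fin k, X.lt i e m) ∧
  -- (14) lt(i,e-1,e,m) ∨ ¬label(i,e-1,m) ∨ label(i,e,m)
  (∀ (i e : ℕ) (m : Fin k), 1 ≤ i → i ≤ n → 1 < e →
    (X.lt i e m ∨ ¬ X.label i (e - 1) m ∨ X.label i e m))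

/-- The induced label set `L(i, e) = {l_m : label(i, e, m) is true}`. -/
def inducedLabels {k : ℕ} (X : SatAssign k) (i e : ℕ) : LabelSet k :=
  {m : Fin k | X.label i e m}

/-- The induced edge set of the graph `G` in `𝒢(X) = (G, I(G))`: it contains
`(v_i, v_j, L(i, e))` whenever `ed(i, j, e)` is true, where node `v_i : Fin n`
corresponds to the node integer `i = v_i + 1` (so `f v = v + 1` and `f v_1 = 1`). -/
def inducedE (n : ℕ) {k : ℕ} (X : SatAssign k) : Set (Edge n k) :=
  {t : Edge n k | ∃ e : ℕ, 1 ≤ e ∧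
    X.ed ((t.1 : ℕ) + 1) ((t.2.1 : ℕ) + 1) e ∧
    t.2.2 = inducedLabels X ((t.1 : ℕ) + 1) e}

/-- The induced node indexing `f(v_i) = i`, i.e. `f v = v + 1` on `Fin n`. -/
def inducedF (n : ℕ) : Fin n → ℕ := fun v => (v : ℕ) + 1

section Aux

variable {k : ℕ}

lemma labelLt_irrefl (L : LabelSet k) : ¬ LabelLt L L := by
  rintro ⟨m, hm1, hm2, -⟩; exact hm1 hm2

lemma labelLt_trans {L1 L2 L3 : LabelSet k} (h12 : LabelLt L1 L2) (h23 : LabelLt L2 L3) :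
    LabelLt L1 L3 := by
  obtain ⟨m1, h1a, h1b, h1c⟩ := h12
  obtain ⟨m2, h2a, h2b, h2c⟩ := h23
  rcases lt_trichotomy m1 m2 with h | h | h
  · refine ⟨m1, h1a, ?_, ?_⟩
    · by_contra hm; exact h2c m1 h ⟨h1b, hm⟩
    · rintro m' hm' ⟨hL1, hL3⟩
      have hL2 : m' ∈ L2 := by by_contra hL2; exact h1c m' hm' ⟨hL1, hL2⟩
      exact h2c m' (hm'.trans h) ⟨hL2, hL3⟩
  · subst h; exact absurd h1b h2a
  · refine ⟨m2, ?_, h2b, ?_⟩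
    · intro hm; exact h1c m2 h ⟨hm, h2a⟩
    · rintro m' hm' ⟨hL1, hL3⟩
      have hL2 : m' ∈ L2 := by by_contra hL2; exact h1c m' (hm'.trans h) ⟨hL1, hL2⟩
      exact h2c m' hm' ⟨hL2, hL3⟩

lemma labelLt_asymm {L1 L2 : LabelSet k} (h : LabelLt L1 L2) : ¬ LabelLt L2 L1 :=
  fun h' => labelLt_irrefl L1 (labelLt_trans h h')

lemma lexLe_antisymm {p q : ℕ × ℕ} (h1 : lexLe p q) (h2 : lexLe q p) : p = q := by
  rcases h1 with h1 | h1
  · rcases h2 with h2 | h2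
    · exfalso; unfold lexLt at h1 h2; omega
    · exact h2.symm
  · exact h1

end Aux

section Main

variable {n k : ℕ} [NeZero n]

/-- The set of edge integers used at node integer `i0`. -/
def Dset (X : SatAssign k) (n i0 : ℕ) : Set ℕ :=
  {e | 1 ≤ e ∧ ∃ j, 1 ≤ j ∧ j ≤ n ∧ X.ed i0 j e}

/-- The induced edge-integer indexing `Γ`. -/
noncomputable def Gam (X : SatAssign k) (n : ℕ) (u : Fin n) (L : LabelSet k) : ℕ :=
  sInf {e | e ∈ Dset X n ((u : ℕ) + 1) ∧ inducedLabels X ((u : ℕ) + 1) e = L}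

lemma descent {X : SatAssign k} (hX : SatisfiesAll n k X) {i0 e : ℕ}
    (hi1 : 1 ≤ i0) (hi2 : i0 ≤ n) (he : 1 < e) :
    ∀ m : Fin k, X.lt i0 e m →
      ∃ m0 : Fin k, m0 ≤ m ∧ ¬ X.label i0 (e - 1) m0 ∧ X.label i0 e m0 := by
  obtain ⟨-,-,-,-,-,-,-,-,-,-,c11,c12,-,-⟩ := hX
  suffices H : ∀ N : ℕ, ∀ m : Fin k, (m : ℕ) ≤ N → X.lt i0 e m →
      ∃ m0 : Fin k, m0 ≤ m ∧ ¬ X.label i0 (e - 1) m0 ∧ X.label i0 e m0 by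
    exact fun m hm => H m m le_rfl hm
  intro N
  induction N with
  | zero =>
    intro m hm hlt
    rcases c11 i0 e m hi1 hi2 he hlt with h1 | ⟨m', hm', -⟩
    · rcases c12 i0 e m hi1 hi2 he hlt with h2 | ⟨m', hm', -⟩
      · exact ⟨m, le_rfl, h1, h2⟩
      · omega
    · omega
  | succ N ih =>
    intro m hm hlt
    rcases c11 i0 e m hi1 hi2 he hlt with h1 | ⟨m', hm', hlt'⟩
    · rcases c12 i0 e m hi1 hi2 he hlt with h2 | ⟨m', hm', hlt'⟩
      · exact ⟨m, le_rfl, h1, h2⟩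
      · obtain ⟨m0, h0, ha, hb⟩ := ih m' (by omega) hlt'
        exact ⟨m0, le_trans h0 (Fin.le_def.mpr (by omega)), ha, hb⟩
    · obtain ⟨m0, h0, ha, hb⟩ := ih m' (by omega) hlt'
      exact ⟨m0, le_trans h0 (Fin.le_def.mpr (by omega)), ha, hb⟩

lemma step_labelLt {X : SatAssign k} (hX : SatisfiesAll n k X) {i0 e j : ℕ}
    (hi1 : 1 ≤ i0) (hi2 : i0 ≤ n) (he : 1 ≤ e) (hj1 : 1 ≤ j) (hj2 : j ≤ n)
    (hed : X.ed i0 j (e + 1)) :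
    LabelLt (inducedLabels X i0 e) (inducedLabels X i0 (e + 1)) := by
  have hdes := descent hX (e := e + 1) hi1 hi2 (by omega)
  obtain ⟨-,-,-,-,-,-,-,-,-,-,-,-,c13,c14⟩ := hX
  obtain ⟨m, hm⟩ := c13 i0 j (e + 1) hi1 hi2 hj1 hj2 (by omega) hed
  obtain ⟨m1, -, hm1a, hm1b⟩ := hdes m hm
  rw [Nat.add_sub_cancel] at hm1a
  set S : Set (Fin k) := {m0 | ¬ X.label i0 e m0 ∧ X.label i0 (e + 1) m0} with hSdef
  have hS : S.Nonempty := ⟨m1, hm1a, hm1b⟩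
  obtain ⟨m0, hm0S, hmin⟩ := (wellFounded_lt (α := Fin k)).has_min S hS
  refine ⟨m0, hm0S.1, hm0S.2, ?_⟩
  rintro m' hm' ⟨hL1, hL2⟩
  have hL1' : X.label i0 e m' := hL1
  have hL2' : ¬ X.label i0 (e + 1) m' := hL2
  rcases c14 i0 (e + 1) m' hi1 hi2 (by omega) with hlt | h | h
  · obtain ⟨m0', hle, ha, hb⟩ := hdes m' hlt
    rw [Nat.add_sub_cancel] at ha
    exact hmin m0' ⟨ha, hb⟩ (lt_of_le_of_lt hle hm')
  · rw [Nat.add_sub_cancel] at h; exact h hL1'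
  · exact hL2' h

lemma chain_labelLt {X : SatAssign k} (hX : SatisfiesAll n k X) {i0 : ℕ}
    (hi1 : 1 ≤ i0) (hi2 : i0 ≤ n) {e e' : ℕ} (he : 1 ≤ e) (hee : e + 1 ≤ e')
    (hD : e' ∈ Dset X n i0) :
    LabelLt (inducedLabels X i0 e) (inducedLabels X i0 e') := by
  induction e', hee using Nat.le_induction with
  | base =>
    obtain ⟨-, j, hj1, hj2, hed⟩ := hD
    exact step_labelLt hX hi1 hi2 he hj1 hj2 hed
  | succ e' hle ih =>
    obtain ⟨-, j, hj1, hj2, hed⟩ := hD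
    have c9 := hX.2.2.2.2.2.2.2.2.1
    obtain ⟨j', hj'1, hj'2, hed'⟩ := c9 i0 j (e' + 1) hi1 hi2 hj1 hj2 (by omega) hed
    rw [Nat.add_sub_cancel] at hed'
    have h1 : LabelLt (inducedLabels X i0 e) (inducedLabels X i0 e') :=
      ih ⟨by omega, j', hj'1, hj'2, hed'⟩
    exact labelLt_trans h1 (step_labelLt hX hi1 hi2 (by omega) hj1 hj2 hed)

lemma labels_inj {X : SatAssign k} (hX : SatisfiesAll n k X) {i0 : ℕ}
    (hi1 : 1 ≤ i0) (hi2 : i0 ≤ n) {e e' : ℕ}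
    (he : e ∈ Dset X n i0) (he' : e' ∈ Dset X n i0)
    (hL : inducedLabels X i0 e = inducedLabels X i0 e') : e = e' := by
  rcases lt_trichotomy e e' with h | h | h
  · exact absurd (hL ▸ chain_labelLt hX hi1 hi2 he.1 (by omega) he') (labelLt_irrefl _)
  · exact h
  · exact absurd (hL ▸ chain_labelLt hX hi1 hi2 he'.1 (by omega) he) (labelLt_irrefl _)

lemma Gam_spec {X : SatAssign k} (hX : SatisfiesAll n k X) {u : Fin n} {e : ℕ}
    (he : e ∈ Dset X n ((u : ℕ) + 1)) :
    Gam X n u (inducedLabels X ((u : ℕ) + 1) e) = e := by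
  have hi1 : 1 ≤ (u : ℕ) + 1 := by omega
  have hi2 : (u : ℕ) + 1 ≤ n := u.isLt
  have hset : {e' | e' ∈ Dset X n ((u : ℕ) + 1) ∧
      inducedLabels X ((u : ℕ) + 1) e' = inducedLabels X ((u : ℕ) + 1) e} = {e} := by
    ext e'
    constructor
    · rintro ⟨hD, hEq⟩; exact labels_inj hX hi1 hi2 hD he hEq
    · rintro rfl; exact ⟨he, rfl⟩
  rw [Gam, hset, csInf_singleton]

end Main
section Main2

set_option linter.unusedSectionVars false

variable {n k : ℕ} [NeZero n]

lemma Dset_finite (X : SatAssign k) {i0 : ℕ} (hX : SatisfiesAll n k X)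
    (hi1 : 1 ≤ i0) (hi2 : i0 ≤ n) : (Dset X n i0).Finite := by
  apply Set.Finite.of_finite_image (f := fun e => inducedLabels X i0 e)
  · exact Set.toFinite _
  · intro e he e' he' hL
    exact labels_inj hX hi1 hi2 he he' hL

lemma Dset_dc {X : SatAssign k} (hX : SatisfiesAll n k X) {i0 e : ℕ}
    (hi1 : 1 ≤ i0) (hi2 : i0 ≤ n) (he : 2 ≤ e) (hD : e ∈ Dset X n i0) :
    e - 1 ∈ Dset X n i0 := by
  obtain ⟨-, j, hj1, hj2, hed⟩ := hD
  have c9 := hX.2.2.2.2.2.2.2.2.1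
  obtain ⟨j', hj'1, hj'2, hed'⟩ := c9 i0 j e hi1 hi2 hj1 hj2 (by omega) hed
  exact ⟨by omega, j', hj'1, hj'2, hed'⟩

lemma Dset_eq_Icc {X : SatAssign k} (hX : SatisfiesAll n k X) {i0 : ℕ}
    (hi1 : 1 ≤ i0) (hi2 : i0 ≤ n) :
    Dset X n i0 = Set.Icc 1 (Dset X n i0).ncard := by
  set S := Dset X n i0 with hSdef
  have hfin : S.Finite := Dset_finite X hX hi1 hi2
  rcases S.eq_empty_or_nonempty with h | h
  · rw [h]; simp
  · have hbdd : BddAbove S := hfin.bddAbove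
    set d := sSup S with hd
    have hdS : d ∈ S := Nat.sSup_mem h hbdd
    have hSeq : S = Set.Icc 1 d := by
      apply Set.Subset.antisymm
      · exact fun e heS => ⟨heS.1, le_csSup hbdd heS⟩
      · rintro e ⟨he1, he2⟩
        have key : ∀ t, 1 ≤ d - t → d - t ∈ S := by
          intro t
          induction t with
          | zero => intro _; simpa using hdS
          | succ t ih =>
            intro ht
            have h1 : d - t ∈ S := ih (by omega)
            have h2 := Dset_dc hX hi1 hi2 (e := d - t) (by omega) h1
            have : d - t - 1 = d - (t + 1) := by omega
            rwa [this] at h2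
        have := key (d - e) (by omega)
        have heq : d - (d - e) = e := by omega
        rwa [heq] at this
    have hcard : S.ncard = d := by
      rw [hSeq, ← Finset.coe_Icc, Set.ncard_coe_finset, Nat.card_Icc]
      omega
    rw [hcard, hSeq]

lemma mem_inducedE_iff {X : SatAssign k} {t : Edge n k} :
    t ∈ inducedE n X ↔ ∃ e : ℕ, 1 ≤ e ∧ X.ed ((t.1 : ℕ) + 1) ((t.2.1 : ℕ) + 1) e ∧
      t.2.2 = inducedLabels X ((t.1 : ℕ) + 1) e := Iff.rfl

lemma mem_outLabels_iff {X : SatAssign k} (hX : SatisfiesAll n k X) {u : Fin n}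
    {L : LabelSet k} :
    L ∈ outLabels (inducedE n X) u ↔
      ∃ e ∈ Dset X n ((u : ℕ) + 1), inducedLabels X ((u : ℕ) + 1) e = L := by
  constructor
  · rintro ⟨t, ⟨⟨e, he1, hed, hL⟩, ht1⟩, rfl⟩
    refine ⟨e, ⟨he1, (t.2.1 : ℕ) + 1, by omega, by have := t.2.1.isLt; omega, ?_⟩, ?_⟩
    · rw [← ht1]; exact hed
    · show inducedLabels X ((u : ℕ) + 1) e = t.2.2
      rw [hL, ht1]
  · rintro ⟨e, ⟨he1, j, hj1, hj2, hed⟩, rfl⟩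
    refine ⟨(u, ⟨j - 1, by omega⟩, inducedLabels X ((u : ℕ) + 1) e), ⟨⟨e, he1, ?_, rfl⟩, rfl⟩, rfl⟩
    simpa [Nat.sub_add_cancel hj1] using hed

lemma outEdges_bij {X : SatAssign k} (hX : SatisfiesAll n k X) (u : Fin n) :
    Set.BijOn (fun t : Edge n k => Gam X n u t.2.2)
      (outEdges (inducedE n X) u) (Dset X n ((u : ℕ) + 1)) := by
  have c10 := hX.2.2.2.2.2.2.2.2.2.1
  have hi2 : (u : ℕ) + 1 ≤ n := u.isLt
  refine ⟨?_, ?_, ?_⟩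
  · rintro t ⟨⟨e, he1, hed, hL⟩, ht1⟩
    subst ht1
    have heD : e ∈ Dset X n ((t.1 : ℕ) + 1) :=
      ⟨he1, (t.2.1 : ℕ) + 1, by omega, by have := t.2.1.isLt; omega, hed⟩
    show Gam X n t.1 t.2.2 ∈ Dset X n ((t.1 : ℕ) + 1)
    rw [hL, Gam_spec hX heD]
    exact heD
  · rintro t ⟨⟨e, he1, hed, hL⟩, ht1⟩ t' ⟨⟨e', he'1, hed', hL'⟩, ht'1⟩ hG
    have heD : e ∈ Dset X n ((t.1 : ℕ) + 1) :=
      ⟨he1, (t.2.1 : ℕ) + 1, by omega, by have := t.2.1.isLt; omega, hed⟩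
    have heD' : e' ∈ Dset X n ((t'.1 : ℕ) + 1) :=
      ⟨he'1, (t'.2.1 : ℕ) + 1, by omega, by have := t'.2.1.isLt; omega, hed'⟩
    change Gam X n u t.2.2 = Gam X n u t'.2.2 at hG
    rw [hL, ht1, Gam_spec hX (ht1 ▸ heD), hL', ht'1, Gam_spec hX (ht'1 ▸ heD')] at hG
    subst hG
    have hjeq : (t.2.1 : ℕ) = (t'.2.1 : ℕ) := by
      by_contra hne
      rcases Nat.lt_or_ge (t.2.1 : ℕ) (t'.2.1 : ℕ) with hlt | hge
      · exact c10 ((u : ℕ) + 1) ((t.2.1 : ℕ) + 1) ((t'.2.1 : ℕ) + 1) e (by omega) hi2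
          (by omega) (by omega) (by have := t'.2.1.isLt; omega) (by omega)
          (ht1 ▸ hed) (ht'1 ▸ hed')
      · exact c10 ((u : ℕ) + 1) ((t'.2.1 : ℕ) + 1) ((t.2.1 : ℕ) + 1) e (by omega) hi2
          (by omega) (by omega) (by have := t.2.1.isLt; omega) (by omega)
          (ht'1 ▸ hed') (ht1 ▸ hed)
    have : t.2 = t'.2 := by
      ext
      · exact hjeq
      · rw [hL, hL', ht1, ht'1]
    exact Prod.ext (ht1.trans ht'1.symm) this
  · rintro e ⟨he1, j, hj1, hj2, hed⟩
    have heD : e ∈ Dset X n ((u : ℕ) + 1) := ⟨he1, j, hj1, hj2, hed⟩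
    refine ⟨(u, ⟨j - 1, by omega⟩, inducedLabels X ((u : ℕ) + 1) e),
      ⟨⟨e, he1, ?_, rfl⟩, rfl⟩, ?_⟩
    · simpa [Nat.sub_add_cancel hj1] using hed
    · exact Gam_spec hX heD

lemma outEdges_ncard {X : SatAssign k} (hX : SatisfiesAll n k X) (u : Fin n) :
    (outEdges (inducedE n X) u).ncard = (Dset X n ((u : ℕ) + 1)).ncard := by
  have hb := outEdges_bij hX u
  rw [← hb.image_eq, Set.ncard_image_of_injOn hb.injOn]

lemma Gam_bijOn {X : SatAssign k} (hX : SatisfiesAll n k X) (u : Fin n) :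
    Set.BijOn (Gam X n u) (outLabels (inducedE n X) u)
      (Set.Icc 1 (outEdges (inducedE n X) u).ncard) := by
  have hi1 : 1 ≤ (u : ℕ) + 1 := by omega
  have hi2 : (u : ℕ) + 1 ≤ n := u.isLt
  have hIcc : Set.Icc 1 (outEdges (inducedE n X) u).ncard = Dset X n ((u : ℕ) + 1) := by
    rw [outEdges_ncard hX u, ← Dset_eq_Icc hX hi1 hi2]
  rw [hIcc]
  refine ⟨?_, ?_, ?_⟩
  · intro L hL
    obtain ⟨e, heD, rfl⟩ := (mem_outLabels_iff hX).mp hL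
    rw [Gam_spec hX heD]; exact heD
  · intro L hL L' hL' hG
    obtain ⟨e, heD, rfl⟩ := (mem_outLabels_iff hX).mp hL
    obtain ⟨e', heD', rfl⟩ := (mem_outLabels_iff hX).mp hL'
    rw [Gam_spec hX heD, Gam_spec hX heD'] at hG
    rw [hG]
  · intro e heD
    exact ⟨inducedLabels X ((u : ℕ) + 1) e,
      (mem_outLabels_iff hX).mpr ⟨e, heD, rfl⟩, Gam_spec hX heD⟩

end Main2
section Main3

set_option linter.unusedSectionVars false

variable {n k : ℕ} [NeZero n]

lemma isParent_spec {X : SatAssign k} (hX : SatisfiesAll n k X) (v w : Fin n)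
    (hwv : (w : ℕ) < (v : ℕ)) {e : ℕ} (he : 1 ≤ e)
    (hpa : X.pa ((w : ℕ) + 1) ((v : ℕ) + 1))
    (hsm : X.sm ((w : ℕ) + 1) ((v : ℕ) + 1) e) :
    IsParent (inducedE n X) (inducedF n) (Gam X n) v ((w : ℕ) + 1, e) := by
  have hvn : (v : ℕ) + 1 ≤ n := v.isLt
  have c4 := hX.2.2.2.1
  have c7 := hX.2.2.2.2.2.2.1
  have c8 := hX.2.2.2.2.2.2.2.1
  have hed : X.ed ((w : ℕ) + 1) ((v : ℕ) + 1) e :=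
    c7 ((w : ℕ) + 1) ((v : ℕ) + 1) e (by omega) (by omega) hvn he hsm
  have hD : e ∈ Dset X n ((w : ℕ) + 1) := ⟨he, (v : ℕ) + 1, by omega, hvn, hed⟩
  constructor
  · refine ⟨(w, v, inducedLabels X ((w : ℕ) + 1) e), ⟨⟨e, he, hed, rfl⟩, rfl⟩, ?_⟩
    show ((w : ℕ) + 1, e) = (inducedF n w, Gam X n w (inducedLabels X ((w : ℕ) + 1) e))
    rw [Gam_spec hX hD]
    rfl
  · rintro ⟨w', v', L⟩ ⟨⟨e', he', hed', hL⟩, hv'⟩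
    have hv'' : v' = v := hv'
    have hed'' : X.ed ((w' : ℕ) + 1) ((v : ℕ) + 1) e' := by rw [← hv'']; exact hed'
    have hD' : e' ∈ Dset X n ((w' : ℕ) + 1) := ⟨he', (v : ℕ) + 1, by omega, hvn, hed''⟩
    have hL' : L = inducedLabels X ((w' : ℕ) + 1) e' := hL
    show lexLe ((w : ℕ) + 1, e) (inducedF n w', Gam X n w' L)
    rw [hL', Gam_spec hX hD']
    have hge : (w : ℕ) + 1 ≤ (w' : ℕ) + 1 := by
      by_contra h
      push_neg at h
      exact c4 ((w : ℕ) + 1) ((w' : ℕ) + 1) ((v : ℕ) + 1) ((v : ℕ) + 1) e'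
        (by omega) (by omega) (by omega) le_rfl hvn he' hpa hed''
    rcases lt_or_eq_of_le hge with hlt | heq
    · exact Or.inl (Or.inl hlt)
    · have hed3 : X.ed ((w : ℕ) + 1) ((v : ℕ) + 1) e' := by rw [heq]; exact hed''
      have hee : e ≤ e' := by
        by_contra h
        push_neg at h
        exact c8 ((w : ℕ) + 1) ((v : ℕ) + 1) ((v : ℕ) + 1) e e'
          (by omega) (by omega) le_rfl hvn he' h hsm hed3
      rcases lt_or_eq_of_le hee with hlt | heq'
      · exact Or.inl (Or.inr ⟨heq, hlt⟩)
      · exact Or.inr (by rw [heq, heq']; rfl)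

lemma isParent_unique {E : Set (Edge n k)} {f : Fin n → ℕ} {Γ : Fin n → LabelSet k → ℕ}
    {v : Fin n} {p p' : ℕ × ℕ}
    (h : IsParent E f Γ v p) (h' : IsParent E f Γ v p') : p = p' := by
  obtain ⟨⟨t, ht, hp⟩, hmin⟩ := h
  obtain ⟨⟨t', ht', hp'⟩, hmin'⟩ := h'
  exact lexLe_antisymm (hp' ▸ hmin t' ht') (hp ▸ hmin' t ht)

lemma parent_lt {X : SatAssign k} (hX : SatisfiesAll n k X) {u v wu wv : Fin n}
    {eu ev : ℕ} (huv : (u : ℕ) < (v : ℕ))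
    (hwu : (wu : ℕ) < (u : ℕ)) (hwv : (wv : ℕ) < (v : ℕ))
    (heu : 1 ≤ eu) (hev : 1 ≤ ev)
    (hpau : X.pa ((wu : ℕ) + 1) ((u : ℕ) + 1))
    (hsmu : X.sm ((wu : ℕ) + 1) ((u : ℕ) + 1) eu)
    (hpav : X.pa ((wv : ℕ) + 1) ((v : ℕ) + 1))
    (hsmv : X.sm ((wv : ℕ) + 1) ((v : ℕ) + 1) ev) :
    lexLt ((wu : ℕ) + 1, eu) ((wv : ℕ) + 1, ev) := by
  have hun : (u : ℕ) + 1 ≤ n := u.isLt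
  have hvn : (v : ℕ) + 1 ≤ n := v.isLt
  have c4 := hX.2.2.2.1
  have c7 := hX.2.2.2.2.2.2.1
  have c8 := hX.2.2.2.2.2.2.2.1
  have c10 := hX.2.2.2.2.2.2.2.2.2.1
  have hedu : X.ed ((wu : ℕ) + 1) ((u : ℕ) + 1) eu :=
    c7 _ _ _ (by omega) (by omega) hun heu hsmu
  have hedv : X.ed ((wv : ℕ) + 1) ((v : ℕ) + 1) ev :=
    c7 _ _ _ (by omega) (by omega) hvn hev hsmv
  have hge : (wu : ℕ) + 1 ≤ (wv : ℕ) + 1 := by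
    by_contra h
    push_neg at h
    exact c4 ((wu : ℕ) + 1) ((wv : ℕ) + 1) ((u : ℕ) + 1) ((v : ℕ) + 1) ev
      (by omega) (by omega) (by omega) (by omega) hvn hev hpau hedv
  rcases lt_or_eq_of_le hge with hlt | heq
  · exact Or.inl hlt
  · right
    refine ⟨heq, ?_⟩
    have hedv' : X.ed ((wu : ℕ) + 1) ((v : ℕ) + 1) ev := by rw [heq]; exact hedv
    rcases lt_trichotomy eu ev with h | h | h
    · exact h
    · exfalso
      exact c10 ((wu : ℕ) + 1) ((u : ℕ) + 1) ((v : ℕ) + 1) eu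
        (by omega) (by omega) (by omega) (by omega) hvn heu hedu (h ▸ hedv')
    · exact absurd hedv' (c8 ((wu : ℕ) + 1) ((u : ℕ) + 1) ((v : ℕ) + 1) eu ev
        (by omega) (by omega) (by omega) hvn hev h hsmu)

lemma parent_exists {X : SatAssign k} (hX : SatisfiesAll n k X) (v : Fin n)
    (hv : v ≠ 0) :
    ∃ w : Fin n, ∃ e : ℕ, (w : ℕ) < (v : ℕ) ∧ 1 ≤ e ∧
      X.pa ((w : ℕ) + 1) ((v : ℕ) + 1) ∧ X.sm ((w : ℕ) + 1) ((v : ℕ) + 1) e := by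
  have hv1 : 1 ≤ (v : ℕ) := by
    have : (v : ℕ) ≠ 0 := fun h => hv (Fin.ext (by simp [h]))
    omega
  have hvn : (v : ℕ) + 1 ≤ n := v.isLt
  obtain ⟨i, hi1, hij, hpa⟩ := hX.1 ((v : ℕ) + 1) (by omega) hvn
  obtain ⟨e, he, hsm⟩ := hX.2.2.1 i ((v : ℕ) + 1) hi1 hij hvn hpa
  refine ⟨⟨i - 1, by omega⟩, e, by simp; omega, he, ?_, ?_⟩ <;>
    · simpa [Nat.sub_add_cancel hi1] using ‹_›

end Main3
/-- If a truth assignment `X` satisfies all clauses in `𝒞`, then in the induced pair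
`𝒢(X) = (G, I(G))` the graph indexing `I(G)` (given by `f v = v + 1` and the induced
edge-integer bijections `Γ` with `Γ_{v_i}(L(i,e)) = e`) is a BFS traversal of `G`;
since each graph in the class `𝒢` has a unique BFS traversal, the SAT encoding cannot
produce two different assignments of node and edge integers representing the same
graph `G`. -/
theorem induced_indexing_isBFS {n k : ℕ} [NeZero n]
    (X : SatAssign k) (hX : SatisfiesAll n k X) :
    ∃ Γ : Fin n → LabelSet k → ℕ,
      IsIndexing (inducedE n X) (inducedF n) Γ ∧
      (∀ (u : Fin n) (e j : ℕ), 1 ≤ e → 1 ≤ j → j ≤ n →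
        X.ed (inducedF n u) j e → Γ u (inducedLabels X (inducedF n u) e) = e) ∧
      IsBFS (inducedE n X) (inducedF n) Γ := by
  refine ⟨Gam X n, ⟨⟨?_, ?_, ?_⟩, ?_, fun u => Gam_bijOn hX u⟩, ?_, ?_, ?_⟩
  · -- MapsTo
    intro v _
    refine ⟨by simp [inducedF], ?_⟩
    have := v.isLt
    simp only [inducedF]
    omega
  · -- InjOn
    intro a _ b _ h
    exact Fin.ext (by simpa [inducedF] using h)
  · -- SurjOn
    rintro m ⟨hm1, hm2⟩
    exact ⟨⟨m - 1, by omega⟩, trivial, by simp [inducedF]; omega⟩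
  · -- f 0 = 1
    simp [inducedF]
  · -- Γ property
    intro u e j he hj1 hj2 hed
    exact Gam_spec hX ⟨he, j, hj1, hj2, hed⟩
  · -- IsBFS (1)
    intro u v hu hv pu pv hpu hpv
    obtain ⟨wu, eu, hwu, heu, hpau, hsmu⟩ := parent_exists hX u hu
    obtain ⟨wv, ev, hwv, hev, hpav, hsmv⟩ := parent_exists hX v hv
    have hpu' := isParent_spec hX u wu hwu heu hpau hsmu
    have hpv' := isParent_spec hX v wv hwv hev hpav hsmv
    have h1 : pu = ((wu : ℕ) + 1, eu) := isParent_unique hpu hpu'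
    have h2 : pv = ((wv : ℕ) + 1, ev) := isParent_unique hpv hpv'
    subst h1; subst h2
    have hf : inducedF n u < inducedF n v ↔ (u : ℕ) < (v : ℕ) := by
      simp [inducedF]
    rw [hf]
    constructor
    · intro hlex
      by_contra h
      push_neg at h
      rcases lt_or_eq_of_le h with hlt | heq
      · have := parent_lt hX hlt hwv hwu hev heu hpav hsmv hpau hsmu
        unfold lexLt at hlex this; omega
      · have huv : u = v := Fin.ext heq.symm
        subst huv
        have heq2 : ((wu : ℕ) + 1, eu) = ((wv : ℕ) + 1, ev) :=
          isParent_unique hpu' hpv'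
        rw [heq2] at hlex
        unfold lexLt at hlex; omega
    · intro hfv
      exact parent_lt hX hfv hwu hwv heu hev hpau hsmu hpav hsmv
  · -- IsBFS (2)
    intro u L L' hL hL'
    obtain ⟨e, heD, rfl⟩ := (mem_outLabels_iff hX).mp hL
    obtain ⟨e', heD', rfl⟩ := (mem_outLabels_iff hX).mp hL'
    rw [Gam_spec hX heD, Gam_spec hX heD']
    have hi1 : 1 ≤ (u : ℕ) + 1 := by omega
    have hi2 : (u : ℕ) + 1 ≤ n := u.isLt
    constructor
    · intro hlt
      by_contra h
      push_neg at h
      rcases lt_or_eq_of_le h with h' | h'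
      · exact labelLt_asymm hlt (chain_labelLt hX hi1 hi2 heD'.1 (by omega) heD)
      · subst h'
        exact labelLt_irrefl _ hlt
    · intro h
      exact chain_labelLt hX hi1 hi2 heD.1 (by omega) heD'

end ISA
end
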